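/- For each pair 1 ≤ i < j ≤ 5 let L_{ij} = span(eᵢ, eⱼ) ⊂ ℂ⁵, where e₁,…,e₅ is the standard basis. Then e₃ vanishes identically on each L_{ij}, so each projective line ℙ(L_{ij}) is contained in Y₁; the ten lines ℙ(L_{ij}) are pairwise distinct and form a single orbit under the 𝔄₅-action; each line ℙ(L_{ij}) contains exactly two singular points of Y₁, namely [eᵢ] and [eⱼ]; and conversely, every line in ℙ⁴ passing through two distinct singular points of Y₁ is one of the lines ℙ(L_{ij}). -/

import Mathlib

open Projectivization MvPolynomial

noncomputable section
set_option linter.unnecessarySeqFocus false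

/-- ℂ⁵ -/
abbrev V5 : Type := Fin 5 → ℂ

/-- ℙ⁴ = ℙ(ℂ⁵) -/
abbrev P4 : Type := Projectivization ℂ V5

/-- The linear automorphism of ℂ⁵ induced by a permutation of the coordinates. -/
def permLin (σ : Equiv.Perm (Fin 5)) : V5 ≃ₗ[ℂ] V5 :=
  LinearEquiv.funCongrLeft ℂ ℂ σ

/-- The induced map on ℙ⁴ of a linear automorphism of ℂ⁵. -/
def projMap (γ : V5 ≃ₗ[ℂ] V5) : P4 → P4 :=
  Projectivization.map γ.toLinearMap γ.injective

/-- The 𝔄₅-orbit of a point of ℙ⁴, for the action by even permutations of coordinates. -/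
def A5orbit (p : P4) : Set P4 :=
  { q | ∃ σ ∈ alternatingGroup (Fin 5), q = projMap (permLin σ) p }

/-- The third elementary symmetric function e₃ = Σ_{i<j<k} xᵢxⱼx_k on ℂ⁵. -/
def E3 (v : V5) : ℂ := ∑ s ∈ (Finset.univ : Finset (Fin 5)).powersetCard 3, ∏ i ∈ s, v i

/-- The cubic threefold Y₁ = {e₃ = 0} ⊂ ℙ⁴. -/
def Y1 : Set P4 :=
  { p | ∃ (v : V5) (hv : v ≠ 0), p = Projectivization.mk ℂ v hv ∧ E3 v = 0 }

lemma single_one_ne_zero (i : Fin 5) : (Pi.single i 1 : V5) ≠ 0 := by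
  intro h
  have := congrFun h i
  simp at this

/-- The 2-plane L_{ij} = span(eᵢ, eⱼ) ⊂ ℂ⁵. -/
def Lij (i j : Fin 5) : Submodule ℂ V5 :=
  Submodule.span ℂ {Pi.single i 1, Pi.single j 1}

/-- The points of the projective line ℙ(L_{ij}) ⊂ ℙ⁴. -/
def lineSet (i j : Fin 5) : Set P4 :=
  { p | ∃ (v : V5) (hv : v ≠ 0), p = Projectivization.mk ℂ v hv ∧ v ∈ Lij i j }

/-- The singular locus of Y₁: the five coordinate points of ℙ⁴. -/
def SingY1 : Set P4 :=
  { p | ∃ i : Fin 5, p = Projectivization.mk ℂ (Pi.single i 1) (single_one_ne_zero i) }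

/-!
A vector of `L_{ij}` has at most two nonzero coordinates, so each monomial `xₐx_bx_c` of `e₃`
vanishes on it, and the coordinate vector `e_k` lies in `L_{ij}` only for `k ∈ {i, j}`; the latter
tells the planes `L_{ij}` apart and locates the singular points on each line. The orbit statement is
the 2-transitivity of `𝔄₅` on the coordinates, and the line through `[eᵢ]` and `[eⱼ]` is unique
because `L_{ij}` already has dimension two.
-/

section SpanSinglePair

open Submodule

variable {K ι : Type*} [DecidableEq ι]

lemma apply_eq_zero_of_mem_span_single_pair [Semiring K] {i j k : ι} (hki : k ≠ i) (hkj : k ≠ j)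
    {v : ι → K} (hv : v ∈ span K {Pi.single i 1, Pi.single j 1}) : v k = 0 := by
  obtain ⟨a, b, rfl⟩ := mem_span_pair.mp hv
  simp [hki, hkj]

lemma single_mem_span_single_pair_iff [Semiring K] [Nontrivial K] {i j k : ι} :
    (Pi.single k 1 : ι → K) ∈ span K {Pi.single i 1, Pi.single j 1} ↔ k = i ∨ k = j := by
  refine ⟨fun h => ?_, ?_⟩
  · by_contra! hk
    simpa using apply_eq_zero_of_mem_span_single_pair hk.1 hk.2 h
  · rintro (rfl | rfl)
    · exact subset_span (Set.mem_insert _ _)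
    · exact subset_span (Set.mem_insert_of_mem _ rfl)

lemma finrank_span_single_pair [Ring K] [Nontrivial K] [StrongRankCondition K] {i j : ι} (hij : i ≠ j) :
    Module.finrank K (span K {(Pi.single i 1 : ι → K), Pi.single j 1}) = 2 := by
  have hli := (Pi.linearIndependent_single_one ι K).comp ![i, j] fun a b => by
    fin_cases a <;> fin_cases b <;> simp [hij, hij.symm]
  have := finrank_span_eq_card hli
  rwa [Fintype.card_fin, Set.range_comp, Matrix.range_cons_cons_empty, Set.image_pair] at this

lemma map_funCongrLeft_span_single_pair [Semiring K] (σ : Equiv.Perm ι) (i j : ι) :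
    (span K {(Pi.single i 1 : ι → K), Pi.single j 1}).map (LinearEquiv.funCongrLeft K K σ).toLinearMap =
      span K {Pi.single (σ.symm i) 1, Pi.single (σ.symm j) 1} := by
  simp [map_span, Set.image_pair, LinearEquiv.funCongrLeft_apply, LinearMap.funLeft,
    Pi.single_comp_equiv]

end SpanSinglePair

lemma Finset.prod_eq_zero_of_card_lt {ι M : Type*} [CommMonoidWithZero M] {v : ι → M}
    {s t : Finset ι} (hvt : ∀ k ∉ t, v k = 0) (hts : t.card < s.card) : ∏ k ∈ s, v k = 0 := by
  obtain ⟨k, hks, hkt⟩ := Finset.exists_mem_notMem_of_card_lt_card hts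
  exact Finset.prod_eq_zero hks (hvt k hkt)

lemma Projectivization.mk_single_ne_mk_single {K ι : Type*} [DivisionRing K] [DecidableEq ι]
    {i j : ι} (hij : i ≠ j) (hi : (Pi.single i 1 : ι → K) ≠ 0) (hj : (Pi.single j 1 : ι → K) ≠ 0) :
    mk K (Pi.single i 1) hi ≠ mk K (Pi.single j 1) hj := by
  rw [Ne, mk_eq_mk_iff']
  rintro ⟨a, ha⟩
  simpa [hij] using congrFun ha i

lemma alternatingGroup.exists_apply_eq_apply_eq {α : Type*} [Fintype α] [DecidableEq α]
    (hα : 4 ≤ Nat.card α) {a b c d : α} (hab : a ≠ b) (hcd : c ≠ d) :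
    ∃ σ ∈ alternatingGroup α, σ a = c ∧ σ b = d := by
  have := alternatingGroup.isMultiplyPretransitive α
  have : MulAction.IsMultiplyPretransitive (alternatingGroup α) α 2 :=
    MulAction.isMultiplyPretransitive_of_le (n := Nat.card α - 2) (by omega) (by omega)
  obtain ⟨σ, hσ⟩ := MulAction.is_two_pretransitive_iff.mp this hab hcd
  exact ⟨σ, σ.2, hσ⟩

lemma E3_eq_zero_of_mem_Lij {i j : Fin 5} {v : V5} (hv : v ∈ Lij i j) : E3 v = 0 := by
  refine Finset.sum_eq_zero fun s hs => Finset.prod_eq_zero_of_card_lt (t := {i, j}) ?_ ?_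
  · intro k hk
    simp only [Finset.mem_insert, Finset.mem_singleton, not_or] at hk
    exact apply_eq_zero_of_mem_span_single_pair hk.1 hk.2 hv
  · rw [(Finset.mem_powersetCard.mp hs).2]
    exact Finset.card_le_two.trans_lt (by norm_num)

lemma Lij_map_permLin (σ : Equiv.Perm (Fin 5)) (i j : Fin 5) :
    (Lij i j).map (permLin σ).toLinearMap = Lij (σ⁻¹ i) (σ⁻¹ j) :=
  map_funCongrLeft_span_single_pair σ i j

lemma Lij_injOn : {p : Fin 5 × Fin 5 | p.1 < p.2}.InjOn fun p => Lij p.1 p.2 := by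
  rintro ⟨i, j⟩ (hij : i < j) ⟨k, l⟩ (hkl : k < l) (h : Lij i j = Lij k l)
  have hmem (m : Fin 5) : m = i ∨ m = j ↔ m = k ∨ m = l := by
    rw [← single_mem_span_single_pair_iff (K := ℂ), ← single_mem_span_single_pair_iff (K := ℂ)]
    change _ ∈ Lij i j ↔ _ ∈ Lij k l
    rw [h]
  have hi := (hmem i).mp (Or.inl rfl)
  have hj := (hmem j).mp (Or.inr rfl)
  have hk := (hmem k).mpr (Or.inl rfl)
  ext <;> simp only <;> omega

lemma ncard_lines : {M : Submodule ℂ V5 | ∃ i j : Fin 5, i ≠ j ∧ M = Lij i j}.ncard = 10 := by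
  have hlines : {M : Submodule ℂ V5 | ∃ i j : Fin 5, i ≠ j ∧ M = Lij i j} =
      (fun p : Fin 5 × Fin 5 => Lij p.1 p.2) '' {p | p.1 < p.2} := by
    ext M
    constructor
    · rintro ⟨i, j, hij, rfl⟩
      rcases hij.lt_or_gt with h | h
      · exact ⟨(i, j), h, rfl⟩
      · exact ⟨(j, i), h, by simp only [Lij, Set.pair_comm]⟩
    · rintro ⟨⟨i, j⟩, h, rfl⟩
      exact ⟨i, j, h.ne, rfl⟩
  rw [hlines, Lij_injOn.ncard_image, Set.ncard_eq_toFinset_card']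
  rfl

lemma lines_eq_orbit : {M : Submodule ℂ V5 | ∃ i j : Fin 5, i ≠ j ∧ M = Lij i j} =
    {M | ∃ σ ∈ alternatingGroup (Fin 5), M = (Lij 0 1).map (permLin σ).toLinearMap} := by
  ext M
  constructor
  · rintro ⟨i, j, hij, rfl⟩
    obtain ⟨σ, hσ, hσi, hσj⟩ :=
      alternatingGroup.exists_apply_eq_apply_eq (by simp) zero_ne_one hij
    exact ⟨σ⁻¹, inv_mem hσ, by rw [Lij_map_permLin, inv_inv, hσi, hσj]⟩
  · rintro ⟨σ, -, rfl⟩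
    exact ⟨σ⁻¹ 0, σ⁻¹ 1, by simp, Lij_map_permLin σ 0 1⟩

lemma mk_mem_lineSet_iff {i j : Fin 5} {v : V5} (hv : v ≠ 0) :
    Projectivization.mk ℂ v hv ∈ lineSet i j ↔ v ∈ Lij i j := by
  refine ⟨?_, fun h => ⟨v, hv, rfl, h⟩⟩
  rintro ⟨w, hw, hvw, hwL⟩
  obtain ⟨a, rfl⟩ := (Projectivization.mk_eq_mk_iff' ℂ v w hv hw).mp hvw
  exact (Lij i j).smul_mem a hwL

lemma lineSet_inter_SingY1 {i j : Fin 5} :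
    lineSet i j ∩ SingY1 =
      {Projectivization.mk ℂ (Pi.single i 1) (single_one_ne_zero i),
       Projectivization.mk ℂ (Pi.single j 1) (single_one_ne_zero j)} := by
  ext p
  constructor
  · rintro ⟨hp, k, rfl⟩
    rcases single_mem_span_single_pair_iff.mp ((mk_mem_lineSet_iff _).mp hp) with rfl | rfl
    exacts [Or.inl rfl, Or.inr rfl]
  · rintro (rfl | rfl)
    · exact ⟨(mk_mem_lineSet_iff _).mpr (single_mem_span_single_pair_iff.mpr (Or.inl rfl)), i, rfl⟩
    · exact ⟨(mk_mem_lineSet_iff _).mpr (single_mem_span_single_pair_iff.mpr (Or.inr rfl)), j, rfl⟩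

/-- The ten lines of Y₁ through pairs of singular points. -/
theorem statement8 :
    (∀ i j : Fin 5, i ≠ j → ∀ v ∈ Lij i j, E3 v = 0) ∧
    (∀ i j : Fin 5, i ≠ j → lineSet i j ⊆ Y1) ∧
    { M : Submodule ℂ V5 | ∃ i j : Fin 5, i ≠ j ∧ M = Lij i j }.ncard = 10 ∧
    { M : Submodule ℂ V5 | ∃ i j : Fin 5, i ≠ j ∧ M = Lij i j } =
      { M : Submodule ℂ V5 | ∃ σ ∈ alternatingGroup (Fin 5),
          M = (Lij 0 1).map (permLin σ).toLinearMap } ∧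
    (∀ i j : Fin 5, i ≠ j →
      Projectivization.mk ℂ (Pi.single i 1) (single_one_ne_zero i) ≠
        Projectivization.mk ℂ (Pi.single j 1) (single_one_ne_zero j) ∧
      lineSet i j ∩ SingY1 =
        {Projectivization.mk ℂ (Pi.single i 1) (single_one_ne_zero i),
         Projectivization.mk ℂ (Pi.single j 1) (single_one_ne_zero j)}) ∧
    (∀ W : Submodule ℂ V5, Module.finrank ℂ W = 2 →
      ∀ i j : Fin 5, i ≠ j →
        (Pi.single i 1 : V5) ∈ W → (Pi.single j 1 : V5) ∈ W → W = Lij i j) := by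
  refine ⟨fun i j _ v => E3_eq_zero_of_mem_Lij, ?_, ncard_lines, lines_eq_orbit,
    fun i j hij => ⟨Projectivization.mk_single_ne_mk_single hij _ _, lineSet_inter_SingY1⟩, ?_⟩
  · rintro i j - p ⟨v, hv, rfl, hvL⟩
    exact ⟨v, hv, rfl, E3_eq_zero_of_mem_Lij hvL⟩
  · intro W hW i j hij hiW hjW
    have hle : Lij i j ≤ W := Submodule.span_le.mpr (Set.insert_subset hiW (by simpa))
    exact (Submodule.eq_of_le_of_finrank_le hle (by rw [hW, Lij, finrank_span_single_pair hij])).symm
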